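/- arXiv:1801.05097 — 6 statements merged into one kernel-verified Lean document; each statement's English description precedes it below -/
import Mathlib

section
/- (Mirsky–Newman–Davenport–Rado theorem) Let a_1 (mod m_1), …, a_N (mod m_N) be residue classes that are pairwise disjoint and whose union is all of ℤ (an exact covering system), with moduli listed in non-decreasing order m_1 ≤ m_2 ≤ … ≤ m_N and m_N ≥ 2. Then m_{N−1} = m_N; that is, the largest modulus is attained by at least two of the residue classes. -/
/-!
Let `M` be the largest modulus and suppose only the class `i₀` has it. Let `L` be the product of
the moduli and `ψ y = exp (2πi y / M)`, a character of `ZMod L`. The classes partition `ZMod L`,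
and the total sum of the nontrivial character `ψ` is `0`. A class of modulus `m` is invariant
under translation by `m`, so its `ψ`-sum is fixed by multiplication by `ψ m`, which is `≠ 1` when
`m < M`; hence all these sums vanish. What remains is the sum over the class of `i₀`, on which
`ψ` is constant, so it is a positive multiple of a root of unity, a contradiction.
-/

open Finset ZMod

theorem AddChar.sum_eq_zero_of_add_mem_iff {G R : Type*} [AddGroup G] [CommRing R] [IsDomain R]
    (ψ : AddChar G R) {s : Finset G} {g : G} (hs : ∀ x, x + g ∈ s ↔ x ∈ s) (hg : ψ g ≠ 1) :
    ∑ x ∈ s, ψ x = 0 := by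
  have hshift : ψ g * ∑ x ∈ s, ψ x = ∑ x ∈ s, ψ x := by
    rw [mul_sum]
    exact sum_equiv (Equiv.addRight g) (fun x => (hs x).symm) fun x _ => by
      rw [Equiv.coe_addRight, map_add_eq_mul, mul_comm]
  have : (ψ g - 1) * ∑ x ∈ s, ψ x = 0 := by rw [sub_mul, hshift, one_mul, sub_self]
  exact (mul_eq_zero.mp this).resolve_left (sub_ne_zero.mpr hg)

theorem Finset.sum_eq_sum_sum_of_existsUnique_mem {α ι M : Type*} [Fintype α] [Fintype ι]
    [AddCommMonoid M] (C : ι → Finset α) (hC : ∀ y, ∃! i, y ∈ C i) (f : α → M) :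
    ∑ y, f y = ∑ i, ∑ y ∈ C i, f y := by
  classical
  calc ∑ y, f y = ∑ y, ∑ i, if y ∈ C i then f y else 0 := by
        refine sum_congr rfl fun y _ => ?_
        obtain ⟨i, hi, huniq⟩ := hC y
        rw [Fintype.sum_eq_single i fun j hj => if_neg fun hy => hj (huniq j hy), if_pos hi]
    _ = ∑ i, ∑ y ∈ C i, f y := by
        rw [sum_comm]
        simp only [sum_ite_mem, univ_inter]

theorem ZMod.stdAddChar_natCast_eq_one_iff {M : ℕ} [NeZero M] (n : ℕ) :
    stdAddChar (n : ZMod M) = 1 ↔ M ∣ n := by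
  rw [← (stdAddChar (N := M)).map_zero_eq_one, injective_stdAddChar.eq_iff, natCast_eq_zero_iff]

/-- The residue class `a mod m` in `ZMod L`. Meaningful only for `m ∣ L`, when
`ZMod.cast : ZMod L → ZMod m` is reduction mod `m`. -/
def ZMod.residueClass (L : ℕ) [NeZero L] (a : ℤ) (m : ℕ) : Finset (ZMod L) :=
  {y | (y.cast : ZMod m) = a}

namespace ZMod

variable {L : ℕ} [NeZero L] {a : ℤ} {m : ℕ}

theorem intCast_mem_residueClass (h : m ∣ L) (x : ℤ) :
    (x : ZMod L) ∈ residueClass L a m ↔ x ≡ a [ZMOD m] := by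
  rw [residueClass, mem_filter_univ, cast_intCast h, intCast_eq_intCast_iff]

theorem add_natCast_mem_residueClass (h : m ∣ L) (y : ZMod L) :
    y + m ∈ residueClass L a m ↔ y ∈ residueClass L a m := by
  simp only [residueClass, mem_filter_univ, cast_add h, cast_natCast h, natCast_self, add_zero]

theorem sum_stdAddChar_cast_residueClass_ne_zero (h : m ∣ L) [NeZero m] :
    ∑ y ∈ residueClass L a m, stdAddChar (y.cast : ZMod m) ≠ 0 := by
  have hconst : ∀ y ∈ residueClass L a m,
      stdAddChar (y.cast : ZMod m) = stdAddChar (a : ZMod m) :=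
    fun y hy => by rw [(mem_filter_univ _).mp hy]
  have hne : (residueClass L a m).Nonempty := ⟨a, (intCast_mem_residueClass h a).mpr rfl⟩
  rw [sum_congr rfl hconst, sum_const]
  exact smul_ne_zero hne.card_pos.ne' (by simp [stdAddChar_apply])

end ZMod

def IsExactCover {ι : Type*} (a : ι → ℤ) (m : ι → ℕ) : Prop :=
  ∀ x : ℤ, ∃! i, x ≡ a i [ZMOD m i]

namespace IsExactCover

variable {ι : Type*} {a : ι → ℤ} {m : ι → ℕ}

theorem existsUnique_mem_residueClass (h : IsExactCover a m) {L : ℕ} [NeZero L]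
    (hdvd : ∀ i, m i ∣ L) (y : ZMod L) : ∃! i, y ∈ residueClass L (a i) (m i) := by
  obtain ⟨x, rfl⟩ := intCast_surjective y
  simpa only [intCast_mem_residueClass (hdvd _)] using h x

theorem exists_ne_modulus_eq_of_forall_le [Fintype ι] (h : IsExactCover a m)
    (hm : ∀ i, 0 < m i) {i₀ : ι} (hmax : ∀ i, m i ≤ m i₀) (h2 : 2 ≤ m i₀) :
    ∃ j ≠ i₀, m j = m i₀ := by
  classical
  by_contra! huniq
  set L := ∏ i, m i
  have : NeZero L := ⟨(prod_pos fun i _ => hm i).ne'⟩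
  set M := m i₀
  have : NeZero M := ⟨(hm i₀).ne'⟩
  have hdvd : ∀ i, m i ∣ L := fun i => dvd_prod_of_mem m (mem_univ i)
  set ψ : AddChar (ZMod L) ℂ :=
    stdAddChar.compAddMonoidHom (castHom (hdvd i₀) (ZMod M)).toAddMonoidHom
  have hψ : ∀ n : ℕ, ψ n = 1 ↔ M ∣ n := fun n => by
    simp [ψ, stdAddChar_natCast_eq_one_iff]
  have hsum_ne : ∀ i ≠ i₀, ∑ y ∈ residueClass L (a i) (m i), ψ y = 0 := fun i hi =>
    ψ.sum_eq_zero_of_add_mem_iff (add_natCast_mem_residueClass (hdvd i)) fun h1 =>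
      huniq i hi (le_antisymm (hmax i) (Nat.le_of_dvd (hm i) ((hψ _).mp h1)))
  have htotal : ∑ y, ψ y = 0 :=
    ψ.sum_eq_zero_of_add_mem_iff (g := 1) (fun _ => by simp only [mem_univ]) fun h1 => by
      have := Nat.le_of_dvd one_pos ((hψ 1).mp (by exact_mod_cast h1))
      omega
  rw [sum_eq_sum_sum_of_existsUnique_mem _ (h.existsUnique_mem_residueClass hdvd),
    Fintype.sum_eq_single i₀ hsum_ne] at htotal
  exact sum_stdAddChar_cast_residueClass_ne_zero (hdvd i₀) htotal

end IsExactCover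

/-- Mirsky–Newman–Davenport–Rado theorem: in an exact covering system with
moduli listed in non-decreasing order and largest modulus at least 2,
the two largest moduli are equal. -/
theorem mirsky_newman_davenport_rado (N : ℕ) (hN : 0 < N)
    (a m : Fin N → ℤ) (hm : ∀ i, 1 ≤ m i)
    (hsorted : ∀ i j : Fin N, i ≤ j → m i ≤ m j)
    (htop : 2 ≤ m ⟨N - 1, by omega⟩)
    (hdisj : ∀ i j : Fin N, i ≠ j → ∀ x : ℤ,
      x ≡ a i [ZMOD m i] → x ≡ a j [ZMOD m j] → False)
    (hcover : ∀ x : ℤ, ∃ i : Fin N, x ≡ a i [ZMOD m i]) :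
    ∃ h2 : 2 ≤ N, m ⟨N - 2, by omega⟩ = m ⟨N - 1, by omega⟩ := by
  lift m to Fin N → ℕ using fun i => by linarith [hm i]
  beta_reduce at *
  have hexact : IsExactCover a m := fun x =>
    (hcover x).elim fun i hi => ⟨i, hi, fun j hj => by_contra fun hji => hdisj j i hji x hj hi⟩
  obtain ⟨j, hj, hjtop⟩ := hexact.exists_ne_modulus_eq_of_forall_le (i₀ := ⟨N - 1, by omega⟩)
    (fun i => by exact_mod_cast hm i)
    (fun i => by exact_mod_cast hsorted i _ (Fin.mk_le_mk.mpr (by omega))) (by exact_mod_cast htop)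
  have hjval : j.val ≤ N - 2 := by
    have : j.val ≠ N - 1 := fun h => hj (Fin.ext h)
    omega
  refine ⟨by omega, le_antisymm (hsorted _ _ (Fin.mk_le_mk.mpr (by omega))) ?_⟩
  rw [← hjtop]
  exact hsorted _ _ (Fin.mk_le_mk.mpr hjval)
end

section
/- No covering system with at least two congruences can be both exact and distinct: there is no finite family of at least two residue classes a_i (mod m_i) which are pairwise disjoint, have pairwise distinct moduli, and whose union is all of ℤ. -/
open Finset

/-- Splitting a sum over `range (d * n)` into blocks of length `n`. -/
lemma sum_range_mul_eq {α : Type*} [AddCommMonoid α] (f : ℕ → α) (d n : ℕ) :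
    ∑ r ∈ Finset.range (d * n), f r
      = ∑ q ∈ Finset.range d, ∑ s ∈ Finset.range n, f (q * n + s) := by
  induction d with
  | zero => simp
  | succ d ih =>
      rw [Nat.succ_mul, Finset.sum_range_add, ih, Finset.sum_range_succ]

/-- No covering system with at least two congruences can be both exact
(pairwise disjoint residue classes) and distinct (pairwise distinct moduli). -/
theorem no_exact_distinct_covering :
    ¬ ∃ (N : ℕ) (a m : Fin N → ℤ),
      2 ≤ N ∧ (∀ i, 1 ≤ m i) ∧ Function.Injective m ∧
      (∀ i j : Fin N, i ≠ j → ∀ x : ℤ,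
        x ≡ a i [ZMOD m i] → x ≡ a j [ZMOD m j] → False) ∧
      (∀ x : ℤ, ∃ i : Fin N, x ≡ a i [ZMOD m i]) := by
  rintro ⟨N, a, m, hN, hm1, hinj, hdisj, hcov⟩
  have hNpos : 0 < N := by omega
  haveI : Nontrivial (Fin N) := Fin.nontrivial_iff_two_le.mpr hN
  -- every modulus is at least 2
  have hm2 : ∀ i, 2 ≤ m i := by
    intro i
    by_contra h
    have hmi : m i = 1 := by have := hm1 i; omega
    obtain ⟨j, hj⟩ := exists_ne i
    exact hdisj j i hj (a j) (Int.ModEq.refl _)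
      (by simp [Int.ModEq, hmi, Int.emod_one])
  -- pick the index with the largest modulus
  obtain ⟨k, -, hk⟩ := Finset.exists_max_image (Finset.univ : Finset (Fin N)) m
    Finset.univ_nonempty
  have hklt : ∀ i, i ≠ k → m i < m k := by
    intro i hi
    exact lt_of_le_of_ne (hk i (Finset.mem_univ i)) (fun h => hi (hinj h))
  -- natural number versions of the moduli
  set n : Fin N → ℕ := fun i => (m i).toNat with hn
  have hcast : ∀ i, (n i : ℤ) = m i := fun i =>
    Int.toNat_of_nonneg (by linarith [hm1 i])
  have hn2 : ∀ i, 2 ≤ n i := by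
    intro i; have := hm2 i; have := hcast i; omega
  set M : ℕ := n k with hM
  have hM2 : 2 ≤ M := hn2 k
  -- a common period L
  set L : ℕ := ∏ i, n i with hL
  have hdvd : ∀ i, n i ∣ L := fun i => Finset.dvd_prod_of_mem n (Finset.mem_univ i)
  have hLpos : 0 < L := Finset.prod_pos (fun i _ => by have := hn2 i; omega)
  -- the primitive M-th root of unity
  set ζ : ℂ := Complex.exp (2 * Real.pi * Complex.I / M) with hζ
  have hprim : IsPrimitiveRoot ζ M := Complex.isPrimitiveRoot_exp M (by omega)
  have hζne1 : ζ ≠ 1 := hprim.ne_one (by omega)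
  have hζL : ζ ^ L = 1 := (hprim.pow_eq_one_iff_dvd L).mpr (hdvd k)
  -- Step A : the full geometric sum vanishes
  have hA : ∑ r ∈ Finset.range L, ζ ^ r = 0 := by
    rw [geom_sum_eq hζne1, hζL, sub_self, zero_div]
  -- Step B : split the sum according to the covering
  have hB : ∑ r ∈ Finset.range L, ζ ^ r
      = ∑ i : Fin N, ∑ r ∈ Finset.range L,
          (if (r : ℤ) ≡ a i [ZMOD m i] then ζ ^ r else 0) := by
    rw [Finset.sum_comm]
    refine Finset.sum_congr rfl (fun r _ => ?_)
    obtain ⟨i0, hi0⟩ := hcov r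
    rw [Finset.sum_eq_single_of_mem i0 (Finset.mem_univ i0)]
    · rw [if_pos hi0]
    · intro j _ hj
      rw [if_neg]
      intro hji
      exact hdisj i0 j (Ne.symm hj) (r : ℤ) hi0 hji
  -- Step C : compute each inner sum
  have hC : ∀ i, ∑ r ∈ Finset.range L, (if (r : ℤ) ≡ a i [ZMOD m i] then ζ ^ r else 0)
      = (∑ q ∈ Finset.range (L / n i), (ζ ^ n i) ^ q)
        * ∑ s ∈ Finset.range (n i), (if (s : ℤ) ≡ a i [ZMOD m i] then ζ ^ s else 0) := by
    intro i
    have hLi : L = (L / n i) * n i := (Nat.div_mul_cancel (hdvd i)).symm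
    conv_lhs => rw [hLi]
    rw [sum_range_mul_eq, Finset.sum_mul]
    refine Finset.sum_congr rfl (fun q _ => ?_)
    rw [Finset.mul_sum]
    refine Finset.sum_congr rfl (fun s _ => ?_)
    have hcond : ((q * n i + s : ℕ) : ℤ) ≡ a i [ZMOD m i] ↔ (s : ℤ) ≡ a i [ZMOD m i] := by
      constructor <;> intro h
      · refine Int.ModEq.trans ?_ h
        rw [Int.modEq_iff_dvd]
        push_cast
        rw [show (q : ℤ) * n i + s - s = q * n i by ring, hcast i]
        exact Dvd.intro_left _ rfl
      · refine Int.ModEq.trans ?_ h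
        rw [Int.modEq_iff_dvd]
        push_cast
        rw [show (s : ℤ) - (q * n i + s) = -(q * (n i : ℤ)) by ring, hcast i]
        exact (Dvd.intro_left _ rfl).neg_right
    by_cases hc : (s : ℤ) ≡ a i [ZMOD m i]
    · rw [if_pos (hcond.mpr hc), if_pos hc, pow_add, mul_comm q (n i), pow_mul]
    · rw [if_neg (fun h => hc (hcond.mp h)), if_neg hc, mul_zero]
  -- for i ≠ k the geometric factor vanishes
  have hCne : ∀ i, i ≠ k →
      ∑ r ∈ Finset.range L, (if (r : ℤ) ≡ a i [ZMOD m i] then ζ ^ r else 0) = 0 := by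
    intro i hi
    have hζni : ζ ^ n i ≠ 1 := by
      intro h
      have := (hprim.pow_eq_one_iff_dvd (n i)).mp h
      have h1 : M ≤ n i := Nat.le_of_dvd (by have := hn2 i; omega) this
      have h2 : m i < m k := hklt i hi
      have := hcast i; have := hcast k; omega
    have hgeom : ∑ q ∈ Finset.range (L / n i), (ζ ^ n i) ^ q = 0 := by
      rw [geom_sum_eq hζni, ← pow_mul, Nat.mul_div_cancel' (hdvd i), hζL, sub_self, zero_div]
    rw [hC i, hgeom, zero_mul]
  -- for i = k the sum is nonzero
  have hCk : ∑ r ∈ Finset.range L, (if (r : ℤ) ≡ a k [ZMOD m k] then ζ ^ r else 0) ≠ 0 := by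
    have hζM : ζ ^ M = 1 := (hprim.pow_eq_one_iff_dvd M).mpr dvd_rfl
    set s0 : ℕ := (a k % m k).toNat with hs0
    have hmkpos : 0 < m k := by linarith [hm1 k]
    have hs0cast : (s0 : ℤ) = a k % m k :=
      Int.toNat_of_nonneg (Int.emod_nonneg _ (by omega))
    have hs0lt : s0 < M := by
      have := Int.emod_lt_of_pos (a k) hmkpos
      have := hcast k; omega
    have huniq : ∀ s ∈ Finset.range M,
        ((s : ℤ) ≡ a k [ZMOD m k] ↔ s = s0) := by
      intro s hs
      rw [Finset.mem_range] at hs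
      constructor
      · intro h
        have hsm : (s : ℤ) < m k := by rw [← hcast k]; exact_mod_cast hs
        have h1 : (s : ℤ) % m k = (s : ℤ) :=
          Int.emod_eq_of_lt (Int.natCast_nonneg s) hsm
        have h2 : (s : ℤ) = a k % m k := by rw [← h1]; exact h
        omega
      · rintro rfl
        show (s0 : ℤ) % m k = a k % m k
        rw [hs0cast, Int.emod_emod_of_dvd _ dvd_rfl]
    have hsum : ∑ s ∈ Finset.range M, (if (s : ℤ) ≡ a k [ZMOD m k] then ζ ^ s else 0)
        = ζ ^ s0 := by
      rw [Finset.sum_congr rfl (fun s hs => by rw [if_congr (huniq s hs) rfl rfl])]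
      rw [Finset.sum_ite_eq' (Finset.range M) s0 (fun s => ζ ^ s),
        if_pos (Finset.mem_range.mpr hs0lt)]
    rw [hC k, hsum]
    have : ∑ q ∈ Finset.range (L / M), (ζ ^ M) ^ q = (L / M : ℕ) := by
      rw [hζM]; simp
    rw [this]
    have hdpos : 0 < L / M := Nat.div_pos (Nat.le_of_dvd hLpos (hdvd k)) (by omega)
    apply mul_ne_zero
    · exact Nat.cast_ne_zero.mpr (by omega)
    · exact pow_ne_zero _ (hprim.ne_zero (by omega))
  -- put everything together
  rw [hB, Finset.sum_eq_single_of_mem k (Finset.mem_univ k)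
    (fun i _ hi => hCne i hi)] at hA
  exact hCk hA
end

section
/- (Boolean analog of the Erdős minimum modulus problem, positive answer) For every positive integer m there exist n and a finite family of subcubes of {0,1}^n with pairwise distinct supports, each support of size at least m, whose union is all of {0,1}^n. -/
/-- Boolean analog of the Erdős minimum modulus problem (positive answer):
for every m there exist n and a finite family of subcubes of {0,1}^n with
pairwise distinct supports, each support of size at least m, covering the
whole cube. -/
theorem boolean_erdos_problem (m : ℕ) (hm : 1 ≤ m) :
    ∃ (n N : ℕ) (supp : Fin N → Finset (Fin n)) (val : Fin N → Fin n → Bool),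
      Function.Injective supp ∧ (∀ k, m ≤ (supp k).card) ∧
      ∀ x : Fin n → Bool, ∃ k, ∀ i ∈ supp k, x i = val k i := by
  classical
  set n := 2 * m with hn
  set T : Finset (Finset (Fin n)) :=
    Finset.univ.filter (fun S => m ≤ S.card) with hT
  refine ⟨n, T.card, fun k => (T.equivFin.symm k : {S // S ∈ T}).1,
    fun k _ => decide (((T.equivFin.symm k : {S // S ∈ T}).1).card = m), ?_, ?_, ?_⟩
  · intro a b hab
    have : (T.equivFin.symm a) = (T.equivFin.symm b) := Subtype.ext hab
    exact T.equivFin.symm.injective this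
  · intro k
    have hmem := (T.equivFin.symm k).2
    exact (Finset.mem_filter.mp hmem).2
  · intro x
    by_cases hx : m ≤ (Finset.univ.filter (fun i => x i = true)).card
    · -- take a size-m subset of the ones
      obtain ⟨S, hSsub, hScard⟩ := Finset.exists_subset_card_eq hx
      have hST : S ∈ T := by
        rw [hT, Finset.mem_filter]
        exact ⟨Finset.mem_univ _, le_of_eq hScard.symm⟩
      refine ⟨T.equivFin ⟨S, hST⟩, ?_⟩
      intro i hi
      simp only [Equiv.symm_apply_apply] at hi ⊢
      have : x i = true := (Finset.mem_filter.mp (hSsub hi)).2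
      rw [this, hScard]
      simp
    · -- the zero set has size ≥ m+1
      push_neg at hx
      set Z : Finset (Fin n) := Finset.univ.filter (fun i => ¬ x i = true) with hZ
      have hsum : (Finset.univ.filter (fun i => x i = true)).card + Z.card
          = Fintype.card (Fin n) := Finset.card_filter_add_card_filter_not _
      have hcardn : Fintype.card (Fin n) = 2 * m := by simp [hn]
      have hZcard : m + 1 ≤ Z.card := by omega
      have hZT : Z ∈ T := by
        rw [hT, Finset.mem_filter]
        exact ⟨Finset.mem_univ _, by omega⟩
      refine ⟨T.equivFin ⟨Z, hZT⟩, ?_⟩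
      intro i hi
      simp only [Equiv.symm_apply_apply] at hi ⊢
      have hxi : ¬ x i = true := (Finset.mem_filter.mp hi).2
      have : Z.card ≠ m := by omega
      simp [this, hxi, Bool.not_eq_true] at *
end

section
/- (Boolean analog of the Mirsky–Newman–Davenport–Rado theorem) Suppose {0,1}^n is partitioned into pairwise disjoint subcubes whose union is all of {0,1}^n, and let s ≥ 1 be the maximum size of a support among the subcubes in the partition. Then at least two subcubes in the partition have support of size s. -/
/-!
Counting points, the subcubes of a partition satisfy `∑ₖ 2^(n - |Sₖ|) = 2^n`; since every
`|Sₖ| ≤ s ≤ n` this rescales to `∑ₖ 2^(s - |Sₖ|) = 2^s`. Modulo 2 only the cubes with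
`|Sₖ| = s` contribute to the left side, while `2^s` is even as `s ≥ 1`. So the number of
cubes of maximal support is even, and being positive it is at least 2.
-/

open Finset Function

section Subcube

variable {α : Type*} [Fintype α] [DecidableEq α]

def subcube (S : Finset α) (v : α → Bool) : Finset (α → Bool) :=
  Fintype.piFinset fun i => if i ∈ S then {v i} else univ

theorem mem_subcube {S : Finset α} {v : α → Bool} {x : α → Bool} :
    x ∈ subcube S v ↔ ∀ i ∈ S, x i = v i := by
  simp only [subcube, Fintype.mem_piFinset]
  refine forall_congr' fun i => ?_
  split_ifs <;> simp_all

theorem card_subcube (S : Finset α) (v : α → Bool) :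
    #(subcube S v) = 2 ^ (Fintype.card α - #S) := by
  simp only [subcube, Fintype.card_piFinset, apply_ite card, card_singleton, card_univ,
    Fintype.card_bool, prod_ite, prod_const_one, prod_const, one_mul, ← card_compl,
    filter_notMem_eq_sdiff, compl_eq_univ_sdiff]

theorem sum_two_pow_sub_card_eq_of_partition {ι : Type*} [Fintype ι] (S : ι → Finset α)
    (v : ι → α → Bool) (hdisj : Pairwise (Disjoint on fun k => subcube (S k) (v k)))
    (hcover : ∀ x, ∃ k, x ∈ subcube (S k) (v k)) :
    ∑ k, 2 ^ (Fintype.card α - #(S k)) = 2 ^ Fintype.card α := by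
  have hunion : univ.biUnion (fun k => subcube (S k) (v k)) = univ :=
    eq_univ_of_forall fun x => by simpa using hcover x
  simpa [card_subcube, hunion] using (card_biUnion (hdisj.set_pairwise (univ : Finset ι))).symm

end Subcube

theorem sum_two_pow_sub_eq_two_pow_of_le {ι : Type*} [Fintype ι] {f : ι → ℕ} {s n : ℕ}
    (hf : ∀ k, f k ≤ s) (hsn : s ≤ n) (hsum : ∑ k, 2 ^ (n - f k) = 2 ^ n) :
    ∑ k, 2 ^ (s - f k) = 2 ^ s := by
  have hsplit (m : ℕ) (hm : m ≤ s) : 2 ^ (n - s) * 2 ^ (s - m) = 2 ^ (n - m) := by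
    rw [← pow_add, Nat.sub_add_sub_cancel hsn hm]
  apply Nat.eq_of_mul_eq_mul_left (pow_pos two_pos (n - s))
  calc 2 ^ (n - s) * ∑ k, 2 ^ (s - f k) = ∑ k, 2 ^ (n - f k) := by
        simp only [mul_sum, hsplit _ (hf _)]
    _ = 2 ^ n := hsum
    _ = 2 ^ (n - s) * 2 ^ s := by rw [← pow_add, Nat.sub_add_cancel hsn]

theorem even_card_filter_eq_of_sum_two_pow_sub_eq {ι : Type*} [Fintype ι] {f : ι → ℕ} {s : ℕ}
    (hs : 1 ≤ s) (hf : ∀ k, f k ≤ s) (hsum : ∑ k, 2 ^ (s - f k) = 2 ^ s) :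
    Even #{k | f k = s} := by
  have hterm (k : ι) : ((2 ^ (s - f k) : ℕ) : ZMod 2) = if f k = s then 1 else 0 := by
    split_ifs with h
    · simp [h]
    · have : s - f k ≠ 0 := by have := hf k; omega
      simp [this, show (2 : ZMod 2) = 0 from rfl]
  rw [← ZMod.natCast_eq_zero_iff_even, ← sum_boole]
  have := congrArg (Nat.cast : ℕ → ZMod 2) hsum
  push_cast [hterm] at this
  simpa [show (2 : ZMod 2) = 0 from rfl, zero_pow (by omega : s ≠ 0)] using this

/-- Boolean analog of the Mirsky–Newman–Davenport–Rado theorem: if {0,1}^n is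
partitioned into pairwise disjoint subcubes and s ≥ 1 is the maximum support
size, then at least two subcubes have support of size s. -/
theorem boolean_mndr (n N : ℕ) (supp : Fin N → Finset (Fin n))
    (val : Fin N → Fin n → Bool)
    (hdisj : ∀ k l : Fin N, k ≠ l → ∀ x : Fin n → Bool,
      (∀ i ∈ supp k, x i = val k i) → (∀ i ∈ supp l, x i = val l i) → False)
    (hcover : ∀ x : Fin n → Bool, ∃ k, ∀ i ∈ supp k, x i = val k i)
    (s : ℕ) (hs : 1 ≤ s)
    (hmax : ∀ k, (supp k).card ≤ s) (hex : ∃ k, (supp k).card = s) :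
    2 ≤ (Finset.univ.filter (fun k : Fin N => (supp k).card = s)).card := by
  obtain ⟨k₀, hk₀⟩ := hex
  have hsn : s ≤ n := hk₀ ▸ (card_le_univ _).trans_eq (Fintype.card_fin n)
  have hsum := sum_two_pow_sub_card_eq_of_partition supp val
    (fun k l hkl => disjoint_left.2 fun x hk hl =>
      hdisj k l hkl x (mem_subcube.1 hk) (mem_subcube.1 hl))
    (fun x => (hcover x).imp fun _ => mem_subcube.2)
  rw [Fintype.card_fin] at hsum
  obtain ⟨m, hm⟩ := even_card_filter_eq_of_sum_two_pow_sub_eq hs hmax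
    (sum_two_pow_sub_eq_two_pow_of_le hmax hsn hsum)
  have hpos : 0 < #{k | (supp k).card = s} := card_pos.2 ⟨k₀, by simpa using hk₀⟩
  omega
end

section
/- A partition of {0,1}^n into pairwise disjoint subcubes whose supports are pairwise distinct must consist of a single subcube, namely {0,1}^n itself (the subcube with empty support). In other words, no exact DNF tautology with at least two terms is distinct. -/
open Finset

/-- Flipping involution: if a set of points is closed under flipping
coordinate `i ∈ T`, the character sum over `T` vanishes. -/
lemma flip_char_sum {n : ℕ} (s : Finset (Fin n → Bool)) (T : Finset (Fin n))
    (i : Fin n) (hi : i ∈ T)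
    (hs : ∀ x ∈ s, Function.update x i (!x i) ∈ s) :
    ∑ x ∈ s, ∏ j ∈ T, (if x j then (-1 : ℤ) else 1) = 0 := by
  classical
  refine Finset.sum_involution (fun x _ => Function.update x i (!x i)) ?_ ?_ hs ?_
  · intro x hx
    have key : ∏ j ∈ T, (if Function.update x i (!x i) j then (-1 : ℤ) else 1)
        = -∏ j ∈ T, (if x j then (-1 : ℤ) else 1) := by
      rw [← Finset.mul_prod_erase T _ hi, ← Finset.mul_prod_erase T
        (fun j => if x j then (-1 : ℤ) else 1) hi]
      have h1 : ∀ j ∈ T.erase i, (if Function.update x i (!x i) j then (-1 : ℤ) else 1)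
          = (if x j then (-1 : ℤ) else 1) := by
        intro j hj
        rw [Function.update_of_ne (Finset.ne_of_mem_erase hj)]
      rw [Finset.prod_congr rfl h1, Function.update_self]
      cases x i <;> simp
    rw [key]; ring
  · intro x hx hne
    intro h
    have := congrFun h i
    simp only [Function.update_self] at this
    cases x i <;> simp_all
  · intro x hx
    funext j
    by_cases hji : j = i
    · subst hji; simp [Function.update_self]
    · simp [Function.update_of_ne hji]

/-- A partition of {0,1}^n into pairwise disjoint subcubes with pairwise
distinct supports must consist of a single subcube, the whole cube (with
empty support). -/
theorem exact_distinct_dnf_trivial (n N : ℕ)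
    (supp : Fin N → Finset (Fin n)) (val : Fin N → Fin n → Bool)
    (hdisj : ∀ k l : Fin N, k ≠ l → ∀ x : Fin n → Bool,
      (∀ i ∈ supp k, x i = val k i) → (∀ i ∈ supp l, x i = val l i) → False)
    (hcover : ∀ x : Fin n → Bool, ∃ k, ∀ i ∈ supp k, x i = val k i)
    (hinj : Function.Injective supp) :
    N = 1 ∧ ∀ k, supp k = ∅ := by
  classical
  -- N > 0
  have hN : Nonempty (Fin N) := ⟨(hcover (fun _ => false)).choose⟩
  -- the assignment of each point to its (unique) cube
  let c : (Fin n → Bool) → Fin N := fun x => (hcover x).choose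
  have hc : ∀ x, ∀ i ∈ supp (c x), x i = val (c x) i := fun x => (hcover x).choose_spec
  -- the cube of k as a finset
  let cube : Fin N → Finset (Fin n → Bool) :=
    fun k => Finset.univ.filter (fun x => ∀ i ∈ supp k, x i = val k i)
  have cube_eq : ∀ k, cube k = Finset.univ.filter (fun x => c x = k) := by
    intro k
    ext x
    simp only [cube, Finset.mem_filter, Finset.mem_univ, true_and]
    constructor
    · intro hx
      by_contra hne
      exact hdisj (c x) k hne x (hc x) hx
    · intro hx
      rw [← hx]; exact hc x
  have cube_nonempty : ∀ k, (cube k).Nonempty := by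
    intro k
    refine ⟨fun i => val k i, ?_⟩
    simp [cube]
  -- pick a cube with maximal support
  obtain ⟨k0, -, hk0⟩ := Finset.exists_max_image Finset.univ (fun k => (supp k).card)
    ⟨hN.some, Finset.mem_univ _⟩
  set T := supp k0 with hT
  -- the main claim: T = ∅
  have hTempty : T = ∅ := by
    by_contra hTne
    obtain ⟨i0, hi0⟩ := Finset.nonempty_iff_ne_empty.mpr hTne
    set f : (Fin n → Bool) → ℤ := fun x => ∏ j ∈ T, (if x j then (-1 : ℤ) else 1) with hf
    -- total sum is zero
    have htot : ∑ x : Fin n → Bool, f x = 0 :=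
      flip_char_sum Finset.univ T i0 hi0 (fun x _ => Finset.mem_univ _)
    -- decompose by fibers
    have hfib : ∑ k : Fin N, ∑ x ∈ cube k, f x = ∑ x : Fin n → Bool, f x := by
      have := Finset.sum_fiberwise_of_maps_to (g := c) (f := f)
        (fun x (_ : x ∈ Finset.univ) => Finset.mem_univ (c x))
      simp only [← cube_eq] at this
      exact this
    -- other cubes contribute zero
    have hzero : ∀ k, k ≠ k0 → ∑ x ∈ cube k, f x = 0 := by
      intro k hk
      have hnotsub : ¬ T ⊆ supp k := by
        intro hsub
        have hcard : (supp k).card ≤ T.card := hk0 k (Finset.mem_univ k)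
        have : T = supp k := Finset.eq_of_subset_of_card_le hsub hcard
        exact hk (hinj this.symm)
      obtain ⟨i, hiT, hiK⟩ := Finset.not_subset.mp hnotsub
      refine flip_char_sum (cube k) T i hiT ?_
      intro x hx
      simp only [cube, Finset.mem_filter, Finset.mem_univ, true_and] at hx ⊢
      intro j hj
      have hji : j ≠ i := by rintro rfl; exact hiK hj
      rw [Function.update_of_ne hji]
      exact hx j hj
    -- the cube k0 contributes a nonzero amount
    have hconst : ∀ x ∈ cube k0, f x = ∏ j ∈ T, (if val k0 j then (-1 : ℤ) else 1) := by
      intro x hx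
      simp only [cube, Finset.mem_filter, Finset.mem_univ, true_and] at hx
      exact Finset.prod_congr rfl (fun j hj => by rw [hx j hj])
    have hne0 : (∏ j ∈ T, (if val k0 j then (-1 : ℤ) else 1)) ≠ 0 := by
      apply Finset.prod_ne_zero_iff.mpr
      intro j hj
      cases val k0 j <;> simp
    have hsum0 : ∑ x ∈ cube k0, f x ≠ 0 := by
      rw [Finset.sum_congr rfl hconst, Finset.sum_const, nsmul_eq_mul]
      have hcpos : (0 : ℤ) < (cube k0).card := by
        exact_mod_cast Finset.card_pos.mpr (cube_nonempty k0)
      exact mul_ne_zero (ne_of_gt hcpos) hne0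
    -- contradiction
    have : ∑ k : Fin N, ∑ x ∈ cube k, f x = ∑ x ∈ cube k0, f x := by
      rw [Finset.sum_eq_single k0]
      · intro k _ hk; exact hzero k hk
      · intro h; exact absurd (Finset.mem_univ k0) h
    rw [hfib, htot] at this
    exact hsum0 this.symm
  -- now every index equals k0
  have hall : ∀ k, k = k0 := by
    intro k
    by_contra hk
    obtain ⟨x, hx⟩ := cube_nonempty k
    simp only [cube, Finset.mem_filter, Finset.mem_univ, true_and] at hx
    exact hdisj k k0 hk x hx (by simp [← hT, hTempty])
  have hN1 : N = 1 := by
    have hpos : 0 < N := Fin.pos_iff_nonempty.mpr hN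
    by_contra hne1
    have h2 : 2 ≤ N := by omega
    have h01 : (⟨0, by omega⟩ : Fin N) = (⟨1, by omega⟩ : Fin N) := by
      rw [hall ⟨0, by omega⟩, hall ⟨1, by omega⟩]
    simpa using congrArg Fin.val h01
  exact ⟨hN1, fun k => by rw [hall k, ← hT, hTempty]⟩
end

section
/- (Negative answer to the general box-covering problem for sequences with convergent reciprocal sums) Let (a_i)_{i≥1} be a weakly increasing sequence of integers with a_1 ≥ 2 such that ∑_{i=1}^{∞} 1/a_i converges. Then there exists a positive integer m such that for every n, there is no finite family of subboxes of the box [1,a_1] × … × [1,a_n] with pairwise distinct fixed-coordinate sets, each fixed-coordinate set of size at least m, whose union is the whole box. -/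
open Finset

/-- Negative answer to the general box-covering problem for sequences with
convergent reciprocal sums: if (a_i) is weakly increasing with a_1 ≥ 2 and
∑ 1/a_i < ∞, then there is m > 0 such that for no n can the box
[1,a_1] × … × [1,a_n] be covered by subboxes with pairwise distinct
fixed-coordinate sets, each of size at least m. -/
theorem no_box_covering_of_summable (a : ℕ → ℕ) (ha2 : 2 ≤ a 0)
    (hmono : Monotone a) (hsum : Summable fun i => (1 : ℝ) / a i) :
    ∃ m : ℕ, 0 < m ∧ ∀ n : ℕ,
      ¬ ∃ (N : ℕ) (S : Fin N → Finset (Fin n)) (v : Fin N → Fin n → ℕ),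
        (∀ j, ∀ i ∈ S j, 1 ≤ v j i ∧ v j i ≤ a i) ∧
        Function.Injective S ∧ (∀ j, m ≤ (S j).card) ∧
        ∀ x : Fin n → ℕ, (∀ i : Fin n, 1 ≤ x i ∧ x i ≤ a i) →
          ∃ j, ∀ i ∈ S j, x i = v j i := by
  classical
  have ha : ∀ i, 2 ≤ a i := fun i => ha2.trans (hmono (Nat.zero_le i))
  set T : ℝ := ∑' i, (1:ℝ) / a i with hT
  obtain ⟨m0, hm0⟩ := pow_unbounded_of_one_lt (Real.exp (2 * T)) (one_lt_two (α := ℝ))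
  refine ⟨m0 + 1, Nat.succ_pos _, fun n => ?_⟩
  rintro ⟨N, Sf, v, hv, hinj, hcard, hcover⟩
  set m := m0 + 1 with hm
  have hexp : Real.exp (2 * T) < 2 ^ m :=
    lt_of_lt_of_le hm0 (pow_le_pow_right₀ one_le_two (Nat.le_succ _))
  have haR : ∀ i : Fin n, (0:ℝ) < a i := fun i => by
    have := ha i.val
    have : (2:ℝ) ≤ a i.val := by exact_mod_cast this
    linarith
  -- counting: the box has ∏ a i points, subbox j covers ∏_{i ∉ S j} a i of them
  set B : Finset (Fin n → ℕ) := Fintype.piFinset (fun i => Finset.Icc 1 (a i)) with hBdef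
  have hBcard : B.card = ∏ i : Fin n, a i.val := by
    simp [hBdef, Nat.card_Icc]
  have hsubset : B ⊆ Finset.univ.biUnion
      (fun j => B.filter (fun x => ∀ i ∈ Sf j, x i = v j i)) := by
    intro x hx
    have hx' : ∀ i, 1 ≤ x i ∧ x i ≤ a i := by
      intro i
      have := (Fintype.mem_piFinset.mp hx) i
      simpa [Finset.mem_Icc] using this
    obtain ⟨j, hj⟩ := hcover x hx'
    exact Finset.mem_biUnion.mpr ⟨j, Finset.mem_univ _, Finset.mem_filter.mpr ⟨hx, hj⟩⟩
  have hcount : (∏ i : Fin n, a i.val) ≤ ∑ j : Fin N, ∏ i : Fin n, (if i ∈ Sf j then 1 else a i.val) := by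
    calc (∏ i : Fin n, a i.val) = B.card := hBcard.symm
      _ ≤ (Finset.univ.biUnion
            (fun j => B.filter (fun x => ∀ i ∈ Sf j, x i = v j i))).card :=
          Finset.card_le_card hsubset
      _ ≤ ∑ j : Fin N, (B.filter (fun x => ∀ i ∈ Sf j, x i = v j i)).card :=
          Finset.card_biUnion_le
      _ ≤ ∑ j : Fin N, ∏ i : Fin n, (if i ∈ Sf j then 1 else a i.val) := by
          apply Finset.sum_le_sum
          intro j _
          have hsub2 : B.filter (fun x => ∀ i ∈ Sf j, x i = v j i) ⊆
              Fintype.piFinset (fun i => if i ∈ Sf j then {v j i} else Finset.Icc 1 (a i)) := by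
            intro x hx
            obtain ⟨hxB, hxfix⟩ := Finset.mem_filter.mp hx
            rw [Fintype.mem_piFinset]
            intro i
            by_cases hi : i ∈ Sf j
            · simp [hi, hxfix i hi]
            · simpa [hi] using (Fintype.mem_piFinset.mp hxB) i
          calc (B.filter (fun x => ∀ i ∈ Sf j, x i = v j i)).card
              ≤ (Fintype.piFinset
                  (fun i => if i ∈ Sf j then {v j i} else Finset.Icc 1 (a i))).card :=
                Finset.card_le_card hsub2
            _ = ∏ i : Fin n, (if i ∈ Sf j then 1 else a i.val) := by
                rw [Fintype.card_piFinset]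
                apply Finset.prod_congr rfl
                intro i _
                split <;> simp [Nat.card_Icc]
  -- translate to reals
  have hprod_ite : ∀ j, (∏ i : Fin n, (if i ∈ Sf j then (1:ℝ) else a i.val)) =
      ∏ i ∈ Finset.univ \ Sf j, (a i.val : ℝ) := by
    intro j
    rw [← Finset.prod_sdiff (Finset.subset_univ (Sf j))]
    rw [show ∏ i ∈ Sf j, (if i ∈ Sf j then (1:ℝ) else a i.val) = 1 from
      Finset.prod_eq_one (fun i hi => by simp [hi])]
    rw [mul_one]
    exact Finset.prod_congr rfl (fun i hi => by simp [(Finset.mem_sdiff.mp hi).2])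
  have hprod_split : ∀ j, (∏ i : Fin n, (a i.val : ℝ)) * ∏ i ∈ Sf j, (1 / (a i.val:ℝ)) =
      ∏ i ∈ Finset.univ \ Sf j, (a i.val : ℝ) := by
    intro j
    rw [← Finset.prod_sdiff (Finset.subset_univ (Sf j)), mul_assoc,
      ← Finset.prod_mul_distrib]
    rw [show ∏ i ∈ Sf j, ((a i.val:ℝ) * (1 / (a i.val:ℝ))) = 1 from
      Finset.prod_eq_one (fun i _ => mul_one_div_cancel (haR i).ne')]
    rw [mul_one]
  have hP : (0:ℝ) < ∏ i : Fin n, (a i.val : ℝ) := Finset.prod_pos (fun i _ => haR i)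
  have h1 : (1:ℝ) ≤ ∑ j : Fin N, ∏ i ∈ Sf j, (1 / (a i.val:ℝ)) := by
    have hcast : (∏ i : Fin n, (a i.val:ℝ)) ≤
        ∑ j : Fin N, ∏ i : Fin n, (if i ∈ Sf j then (1:ℝ) else a i.val) := by
      have := hcount
      calc (∏ i : Fin n, (a i.val:ℝ)) = ((∏ i : Fin n, a i.val : ℕ) : ℝ) := by push_cast; rfl
        _ ≤ ((∑ j : Fin N, ∏ i : Fin n, (if i ∈ Sf j then 1 else a i.val) : ℕ) : ℝ) :=
            Nat.cast_le.mpr this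
        _ = ∑ j : Fin N, ∏ i : Fin n, (if i ∈ Sf j then (1:ℝ) else a i.val) := by
            push_cast [apply_ite (Nat.cast : ℕ → ℝ)]
            rfl
    have : (∏ i : Fin n, (a i.val:ℝ)) ≤
        (∏ i : Fin n, (a i.val:ℝ)) * ∑ j : Fin N, ∏ i ∈ Sf j, (1 / (a i.val:ℝ)) := by
      rw [Finset.mul_sum]
      calc (∏ i : Fin n, (a i.val:ℝ))
          ≤ ∑ j : Fin N, ∏ i : Fin n, (if i ∈ Sf j then (1:ℝ) else a i.val) := hcast
        _ = ∑ j : Fin N, (∏ i : Fin n, (a i.val:ℝ)) * ∏ i ∈ Sf j, (1 / (a i.val:ℝ)) := by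
            apply Finset.sum_congr rfl
            intro j _
            rw [hprod_ite j, hprod_split j]
    exact (le_mul_iff_one_le_right hP).mp this
  have h2 : ∑ j : Fin N, ∏ i ∈ Sf j, (1/(a i.val:ℝ)) ≤
      ∑ s ∈ Finset.univ.filter (fun s : Finset (Fin n) => m ≤ s.card),
        ∏ i ∈ s, (1/(a i.val:ℝ)) := by
    rw [show (∑ j : Fin N, ∏ i ∈ Sf j, (1/(a i.val:ℝ))) =
        ∑ s ∈ Finset.univ.image Sf, ∏ i ∈ s, (1/(a i.val:ℝ)) from
      (Finset.sum_image (f := fun s : Finset (Fin n) => ∏ i ∈ s, (1/(a i.val:ℝ))) (g := Sf) (fun x _ y _ h => hinj h)).symm]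
    apply Finset.sum_le_sum_of_subset_of_nonneg
    · intro s hs
      obtain ⟨j, _, rfl⟩ := Finset.mem_image.mp hs
      exact Finset.mem_filter.mpr ⟨Finset.mem_univ _, hcard j⟩
    · intro s _ _
      apply Finset.prod_nonneg
      intro i _
      positivity
  have h3 : ∑ s ∈ Finset.univ.filter (fun s : Finset (Fin n) => m ≤ s.card),
      ∏ i ∈ s, (1/(a i.val:ℝ)) ≤ (1/2)^m * Real.exp (2*T) := by
    have hstep : ∀ s : Finset (Fin n), m ≤ s.card →
        ∏ i ∈ s, (1/(a i.val:ℝ)) ≤ (1/2:ℝ)^m * ∏ i ∈ s, (2/(a i.val:ℝ)) := by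
      intro s hs
      have heq : ∏ i ∈ s, (1/(a i.val:ℝ)) = (1/2:ℝ)^s.card * ∏ i ∈ s, (2/(a i.val:ℝ)) := by
        rw [← Finset.prod_const, ← Finset.prod_mul_distrib]
        apply Finset.prod_congr rfl
        intro i _
        have := (haR i).ne'
        field_simp
      rw [heq]
      apply mul_le_mul_of_nonneg_right
      · exact pow_le_pow_of_le_one (by norm_num) (by norm_num) hs
      · apply Finset.prod_nonneg
        intro i _
        positivity
    calc ∑ s ∈ Finset.univ.filter (fun s : Finset (Fin n) => m ≤ s.card),
          ∏ i ∈ s, (1/(a i.val:ℝ))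
        ≤ ∑ s ∈ Finset.univ.filter (fun s : Finset (Fin n) => m ≤ s.card),
            (1/2:ℝ)^m * ∏ i ∈ s, (2/(a i.val:ℝ)) :=
          Finset.sum_le_sum (fun s hs => hstep s (Finset.mem_filter.mp hs).2)
      _ ≤ ∑ s : Finset (Fin n), (1/2:ℝ)^m * ∏ i ∈ s, (2/(a i.val:ℝ)) := by
          apply Finset.sum_le_sum_of_subset_of_nonneg (Finset.filter_subset _ _)
          intro s _ _
          have : (0:ℝ) ≤ ∏ i ∈ s, (2/(a i.val:ℝ)) :=
            Finset.prod_nonneg (fun i _ => by positivity)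
          positivity
      _ = (1/2:ℝ)^m * ∑ s : Finset (Fin n), ∏ i ∈ s, (2/(a i.val:ℝ)) := by
          rw [Finset.mul_sum]
      _ = (1/2:ℝ)^m * ∏ i : Fin n, (2/(a i.val:ℝ) + 1) := by
          congr 1
          rw [Finset.prod_add]
          rw [Finset.powerset_univ]
          apply Finset.sum_congr rfl
          intro s _
          simp
      _ ≤ (1/2:ℝ)^m * Real.exp (2*T) := by
          apply mul_le_mul_of_nonneg_left _ (by positivity)
          calc ∏ i : Fin n, (2/(a i.val:ℝ) + 1)
              ≤ ∏ i : Fin n, Real.exp (2/(a i.val:ℝ)) := by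
                apply Finset.prod_le_prod
                · intro i _; positivity
                · intro i _; exact Real.add_one_le_exp _
            _ = Real.exp (∑ i : Fin n, 2/(a i.val:ℝ)) := (Real.exp_sum _ _).symm
            _ ≤ Real.exp (2*T) := by
                apply Real.exp_le_exp.mpr
                have heq2 : ∑ i : Fin n, 2/(a i.val:ℝ) = 2 * ∑ i : Fin n, 1/(a i.val:ℝ) := by
                  rw [Finset.mul_sum]
                  apply Finset.sum_congr rfl
                  intro i _
                  ring
                rw [heq2]
                have h4 : ∑ i : Fin n, (1:ℝ)/(a i.val) ≤ T := by
                  rw [Fin.sum_univ_eq_sum_range (fun i => (1:ℝ)/(a i))]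
                  exact Summable.sum_le_tsum (Finset.range n) (fun i _ => by positivity) hsum
                linarith
  have hge : (1:ℝ) ≤ (1/2:ℝ)^m * Real.exp (2*T) := le_trans h1 (le_trans h2 h3)
  have hlt : (1/2:ℝ)^m * Real.exp (2*T) < (1/2:ℝ)^m * 2^m :=
    mul_lt_mul_of_pos_left hexp (by positivity)
  have hone : (1/2:ℝ)^m * 2^m = 1 := by
    rw [← mul_pow]
    norm_num
  linarith
end
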